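/- arXiv:1904.07847 — 5 statements merged into one kernel-verified Lean document; each statement's English description precedes it below -/
import Mathlib

section
/- Let D_i = {x ∈ M₂(F_q) : det x = i} with i ∈ F_q*. For any y ∈ M₂(F_q), Σ_{x ∈ D_i} χ(−x ⊙ y) = q³·δ₀(y) + q·Σ_{r ∈ F_q*} χ(−i r − det(y)/r), where δ₀(y) = 1 if y is the zero matrix and 0 otherwise. -/
open Finset

/-- The Odot product on 2×2 matrices. -/
def odot {R : Type*} [CommRing R] (x y : Matrix (Fin 2) (Fin 2) R) : R :=
  x 0 0 * y 1 1 - x 0 1 * y 1 0 - x 1 0 * y 0 1 + x 1 1 * y 0 0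

section helpers

variable {F : Type*} [Field F] [Fintype F] [DecidableEq F]

lemma l1 (χ : AddChar F ℂ) (hχ : χ ≠ 1) (b : F) :
    ∑ x : F, χ (x * b) = if b = 0 then (Fintype.card F : ℂ) else 0 := by
  rw [AddChar.sum_mulShift b (AddChar.IsPrimitive.of_ne_one hχ),
    apply_ite ((↑) : ℕ → ℂ)]
  simp

lemma pair_sum (χ : AddChar F ℂ) (hχ : χ ≠ 1) {t : F} (ht : t ≠ 0) (a b : F) :
    ∑ u : F, ∑ v : F, χ (t * u * v + a * u + b * v)
      = (Fintype.card F : ℂ) * χ (-(a * b) / t) := by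
  have key : ∀ u : F, ∑ v : F, χ (t * u * v + a * u + b * v)
      = χ (a * u) * (if t * u + b = 0 then (Fintype.card F : ℂ) else 0) := by
    intro u
    rw [← l1 χ hχ, Finset.mul_sum]
    refine Finset.sum_congr rfl fun v _ => ?_
    rw [← AddChar.map_add_eq_mul]
    congr 1
    ring
  have hcond : ∀ u : F, (t * u + b = 0) = (u = -b / t) := by
    intro u
    refine propext ⟨fun h => ?_, fun h => ?_⟩
    · field_simp
      linear_combination h
    · rw [h]
      field_simp
      ring
  simp_rw [key, hcond, mul_ite, mul_zero]
  rw [Finset.sum_ite_eq' Finset.univ (-b / t) (fun u => χ (a * u) * (Fintype.card F : ℂ))]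
  simp only [Finset.mem_univ, if_true]
  rw [mul_comm]
  congr 2
  field_simp

lemma matrix_sum (f : Matrix (Fin 2) (Fin 2) F → ℂ) :
    ∑ x : Matrix (Fin 2) (Fin 2) F, f x
      = ∑ a : F, ∑ d : F, ∑ b : F, ∑ c : F, f !![a, b; c, d] := by
  have e : ∑ x : Matrix (Fin 2) (Fin 2) F, f x
      = ∑ p : F × F × F × F, f !![p.1, p.2.2.1; p.2.2.2, p.2.1] := by
    refine Fintype.sum_bijective
      (fun x : Matrix (Fin 2) (Fin 2) F => (x 0 0, x 1 1, x 0 1, x 1 0)) ?_ _ _ (fun x => ?_)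
    · refine Function.bijective_iff_has_inverse.2
        ⟨fun p => !![p.1, p.2.2.1; p.2.2.2, p.2.1], fun x => ?_, fun p => ?_⟩
      · exact (Matrix.eta_fin_two x).symm
      · simp
    · exact congrArg f (Matrix.eta_fin_two x)
  rw [e]
  simp [Fintype.sum_prod_type]

lemma sum4 (f g h k : F → ℂ) :
    ∑ a : F, ∑ b : F, ∑ c : F, ∑ d : F, f a * g b * h c * k d
      = (∑ a : F, f a) * (∑ b : F, g b) * (∑ c : F, h c) * (∑ d : F, k d) := by
  simp_rw [mul_assoc, ← Finset.mul_sum, ← Finset.sum_mul]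

set_option maxHeartbeats 1000000 in
lemma T0 (χ : AddChar F ℂ) (hχ : χ ≠ 1) (y : Matrix (Fin 2) (Fin 2) F) :
    ∑ x : Matrix (Fin 2) (Fin 2) F, χ (-(odot x y))
      = (Fintype.card F : ℂ) ^ 4 * (if y = 0 then 1 else 0) := by
  rw [matrix_sum (fun x => χ (-(odot x y)))]
  have expand : ∀ a d b c : F, χ (-(odot !![a, b; c, d] y))
      = χ (a * (-(y 1 1))) * χ (d * (-(y 0 0))) * χ (b * (y 1 0)) * χ (c * (y 0 1)) := by
    intro a d b c
    rw [← AddChar.map_add_eq_mul, ← AddChar.map_add_eq_mul, ← AddChar.map_add_eq_mul]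
    congr 1
    simp [odot]
    ring
  simp_rw [expand]
  rw [sum4 (fun a => χ (a * (-(y 1 1)))) (fun d => χ (d * (-(y 0 0))))
    (fun b => χ (b * (y 1 0))) (fun c => χ (c * (y 0 1)))]
  rw [l1 χ hχ, l1 χ hχ, l1 χ hχ, l1 χ hχ]
  simp only [neg_eq_zero]
  by_cases hy : y = 0
  · simp [hy]
    ring
  · have : ¬(y 1 1 = 0 ∧ y 0 0 = 0 ∧ y 1 0 = 0 ∧ y 0 1 = 0) := by
      rintro ⟨h1, h2, h3, h4⟩
      apply hy
      rw [Matrix.eta_fin_two y, h1, h2, h3, h4]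
      simp [Matrix.eta_fin_two (0 : Matrix (Fin 2) (Fin 2) F)]
    simp only [hy, if_false, mul_zero]
    by_cases h1 : y 1 1 = 0 <;> by_cases h2 : y 0 0 = 0 <;> by_cases h3 : y 1 0 = 0 <;>
      by_cases h4 : y 0 1 = 0 <;> simp [h1, h2, h3, h4] <;> tauto

lemma St (χ : AddChar F ℂ) (hχ : χ ≠ 1) {t : F} (ht : t ≠ 0) (y : Matrix (Fin 2) (Fin 2) F) :
    ∑ x : Matrix (Fin 2) (Fin 2) F, χ (t * x.det - odot x y)
      = (Fintype.card F : ℂ) ^ 2 * χ (-(y.det) / t) := by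
  rw [matrix_sum (fun x => χ (t * x.det - odot x y))]
  have expand : ∀ a d b c : F, χ (t * (!![a, b; c, d]).det - odot !![a, b; c, d] y)
      = χ (t * a * d + (-(y 1 1)) * a + (-(y 0 0)) * d)
        * χ ((-t) * b * c + (y 1 0) * b + (y 0 1) * c) := by
    intro a d b c
    rw [← AddChar.map_add_eq_mul]
    congr 1
    simp [odot, Matrix.det_fin_two_of]
    ring
  simp_rw [expand]
  simp_rw [← Finset.mul_sum, ← Finset.sum_mul]
  rw [pair_sum χ hχ ht (-(y 1 1)) (-(y 0 0)),
    pair_sum χ hχ (neg_ne_zero.2 ht) (y 1 0) (y 0 1)]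
  have : χ (-(-(y 1 1) * -(y 0 0)) / t) * χ (-((y 1 0) * (y 0 1)) / (-t)) = χ (-(y.det) / t) := by
    rw [← AddChar.map_add_eq_mul]
    congr 1
    rw [Matrix.det_fin_two]
    field_simp
    ring
  calc (Fintype.card F : ℂ) * χ (-(-(y 1 1) * -(y 0 0)) / t)
        * ((Fintype.card F : ℂ) * χ (-((y 1 0) * (y 0 1)) / (-t)))
      = (Fintype.card F : ℂ) ^ 2
        * (χ (-(-(y 1 1) * -(y 0 0)) / t) * χ (-((y 1 0) * (y 0 1)) / (-t))) := by ring
    _ = _ := by rw [this]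

end helpers

set_option maxHeartbeats 1000000 in
theorem stmt_6 {F : Type*} [Field F] [Fintype F] [DecidableEq F]
    (hodd : Odd (Fintype.card F))
    (χ : AddChar F ℂ) (hχ : χ ≠ 1) (i : F) (hi : i ≠ 0) (y : Matrix (Fin 2) (Fin 2) F) :
    ∑ x ∈ Finset.univ.filter (fun x : Matrix (Fin 2) (Fin 2) F => x.det = i),
        χ (-(odot x y)) =
      (Fintype.card F : ℂ) ^ 3 * (if y = 0 then 1 else 0) +
        (Fintype.card F : ℂ) *
          ∑ r ∈ Finset.univ \ {0}, χ (-(i * r) - y.det / r) := by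
  classical
  have hq : (Fintype.card F : ℂ) ≠ 0 := by
    exact_mod_cast Fintype.card_ne_zero
  apply mul_left_cancel₀ hq
  have key : (Fintype.card F : ℂ) *
      ∑ x ∈ Finset.univ.filter (fun x : Matrix (Fin 2) (Fin 2) F => x.det = i),
        χ (-(odot x y))
      = (Fintype.card F : ℂ) ^ 4 * (if y = 0 then 1 else 0) +
        ∑ t ∈ Finset.univ \ {0}, (Fintype.card F : ℂ) ^ 2 * χ (-(i * t) - y.det / t) := by
    calc (Fintype.card F : ℂ) *
        ∑ x ∈ Finset.univ.filter (fun x : Matrix (Fin 2) (Fin 2) F => x.det = i),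
          χ (-(odot x y))
        = ∑ x : Matrix (Fin 2) (Fin 2) F,
            (if x.det = i then (Fintype.card F : ℂ) else 0) * χ (-(odot x y)) := by
          rw [Finset.mul_sum, Finset.sum_filter]
          simp_rw [ite_mul, zero_mul]
      _ = ∑ x : Matrix (Fin 2) (Fin 2) F,
            (∑ t : F, χ (t * (x.det - i))) * χ (-(odot x y)) := by
          refine Finset.sum_congr rfl fun x _ => ?_
          rw [l1 χ hχ (x.det - i)]
          congr 1
          simp [sub_eq_zero]
      _ = ∑ x : Matrix (Fin 2) (Fin 2) F, ∑ t : F, χ (t * (x.det - i) - odot x y) := by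
          refine Finset.sum_congr rfl fun x _ => ?_
          rw [Finset.sum_mul]
          refine Finset.sum_congr rfl fun t _ => ?_
          rw [← AddChar.map_add_eq_mul]
          congr 1
          ring
      _ = ∑ t : F, ∑ x : Matrix (Fin 2) (Fin 2) F, χ (t * (x.det - i) - odot x y) :=
          Finset.sum_comm
      _ = (∑ x : Matrix (Fin 2) (Fin 2) F, χ ((0 : F) * (x.det - i) - odot x y)) +
          ∑ t ∈ Finset.univ \ {0},
            ∑ x : Matrix (Fin 2) (Fin 2) F, χ (t * (x.det - i) - odot x y) := by
          exact Finset.sum_eq_add_sum_sdiff_singleton_of_mem (Finset.mem_univ (0 : F)) _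
      _ = (Fintype.card F : ℂ) ^ 4 * (if y = 0 then 1 else 0) +
          ∑ t ∈ Finset.univ \ {0}, (Fintype.card F : ℂ) ^ 2 * χ (-(i * t) - y.det / t) := by
          congr 1
          · simp only [zero_mul, zero_sub]
            exact T0 χ hχ y
          · refine Finset.sum_congr rfl fun t htm => ?_
            have ht : t ≠ 0 := by
              simpa using (Finset.mem_sdiff.1 htm).2
            calc ∑ x : Matrix (Fin 2) (Fin 2) F, χ (t * (x.det - i) - odot x y)
                = ∑ x : Matrix (Fin 2) (Fin 2) F,
                    χ (t * x.det - odot x y) * χ (-(i * t)) := by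
                  refine Finset.sum_congr rfl fun x _ => ?_
                  rw [← AddChar.map_add_eq_mul]
                  congr 1
                  ring
              _ = (∑ x : Matrix (Fin 2) (Fin 2) F, χ (t * x.det - odot x y)) * χ (-(i * t)) :=
                  by rw [Finset.sum_mul]
              _ = (Fintype.card F : ℂ) ^ 2 * χ (-(y.det) / t) * χ (-(i * t)) := by
                  rw [St χ hχ ht y]
              _ = (Fintype.card F : ℂ) ^ 2 * χ (-(i * t) - y.det / t) := by
                  rw [mul_assoc, ← AddChar.map_add_eq_mul]
                  congr 2
                  ring
  rw [key, ← Finset.mul_sum]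
  ring
end

section
/- For t ∈ F_q and m ∈ M₂(F_q), the Fourier transform of the indicator of D_t = {x : det x = t}, defined by \hat{D_t}(m) = q⁻⁴ Σ_{x: det x = t} χ(−m·x) with the standard dot product on F_q⁴, equals δ₀(m)/q + q⁻³ Σ_{s ≠ 0} χ(−s t − det(m)/s). -/
/-
Fourier-expand the condition `det x = t` as `q⁻¹ ∑ₛ χ (s (det x - t))`. The term `s = 0` is
the character sum `∑ₓ χ (-m·x) = q⁴ δ₀(m)`. For `s ≠ 0`, completing the square gives
`s det x - m·x = s det (x - s⁻¹ adj(m)ᵀ) - det m / s`, so by translation invariance it remains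
to show `∑ₓ χ (s det x) = q²`. This is computed row by row: for a fixed first row, `s det x` is
a linear form in the second row which vanishes only when the first row does.
-/

open Finset
open scoped Matrix

theorem AddChar.map_sum_eq_prod {A M ι : Type*} [AddCommMonoid A] [CommMonoid M]
    (ψ : AddChar A M) (s : Finset ι) (f : ι → A) : ψ (∑ i ∈ s, f i) = ∏ i ∈ s, ψ (f i) :=
  map_prod ψ.toMonoidHom (fun i => Multiplicative.ofAdd (f i)) s

theorem mul_det_sub_pairing_fin_two {F : Type*} [Field F] (x m : Matrix (Fin 2) (Fin 2) F)
    {s : F} (hs : s ≠ 0) :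
    s * x.det - ∑ a, ∑ b, m a b * x a b = s * (x - s⁻¹ • m.adjugateᵀ).det - m.det / s := by
  simp only [Matrix.det_fin_two, Fin.sum_univ_two, Matrix.adjugate_fin_two, Matrix.sub_apply,
    Matrix.smul_apply, Matrix.transpose_apply, Matrix.of_apply, Matrix.cons_val',
    Matrix.cons_val_zero, Matrix.cons_val_fin_one, smul_eq_mul, Matrix.cons_val_one]
  field_simp
  ring

section

variable {F : Type*} [Field F] [Fintype F] [DecidableEq F] {χ : AddChar F ℂ}

theorem sum_addChar_mul_eq_ite (hχ : χ ≠ 1) (b : F) :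
    ∑ a, χ (b * a) = if b = 0 then (Fintype.card F : ℂ) else 0 := by
  simp_rw [mul_comm b, AddChar.sum_mulShift b (.of_ne_one hχ)]
  split_ifs <;> simp

theorem card_mul_sum_filter_eq_sum_addChar (hχ : χ ≠ 1) {α : Type*} [Fintype α]
    (f : α → F) (g : α → ℂ) (t : F) :
    (Fintype.card F : ℂ) * ∑ x ∈ univ.filter (fun x => f x = t), g x =
      ∑ s, χ (-(s * t)) * ∑ x, χ (s * f x) * g x := by
  have hchar : ∀ s x, χ (-(s * t)) * (χ (s * f x) * g x) = χ ((f x - t) * s) * g x := by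
    intro s x
    rw [← mul_assoc, ← AddChar.map_add_eq_mul]
    ring_nf
  simp_rw [mul_sum, hchar]
  rw [sum_comm, sum_filter]
  refine sum_congr rfl fun x _ => ?_
  rw [← sum_mul, sum_addChar_mul_eq_ite hχ]
  by_cases h : f x = t <;> simp [h, sub_eq_zero]

theorem sum_addChar_dotProduct_eq_ite (hχ : χ ≠ 1) {ι : Type*} [Fintype ι] [DecidableEq ι]
    (m : ι → F) :
    ∑ x : ι → F, χ (m ⬝ᵥ x) = if m = 0 then (Fintype.card F : ℂ) ^ Fintype.card ι else 0 := by
  simp_rw [dotProduct, AddChar.map_sum_eq_prod]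
  rw [← Fintype.prod_sum (fun i a => χ (m i * a))]
  simp_rw [sum_addChar_mul_eq_ite hχ]
  rw [Fintype.prod_ite_zero]
  simp [funext_iff]

theorem sum_addChar_matrix_pairing_eq_ite (hχ : χ ≠ 1) {ι κ : Type*}
    [Fintype ι] [DecidableEq ι] [Fintype κ] [DecidableEq κ] (m : Matrix ι κ F) :
    ∑ x : Matrix ι κ F, χ (∑ a, ∑ b, m a b * x a b) =
      if m = 0 then (Fintype.card F : ℂ) ^ (Fintype.card ι * Fintype.card κ) else 0 := by
  refine (Fintype.sum_equiv (Equiv.curry ι κ F) (fun y => χ (Function.uncurry m ⬝ᵥ y)) _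
    fun y => by rw [dotProduct, Fintype.sum_prod_type]; rfl).symm.trans ?_
  have huncurry : Function.uncurry m = 0 ↔ m = 0 := by
    simp only [funext_iff, Prod.forall, ← Matrix.ext_iff]; rfl
  simp only [sum_addChar_dotProduct_eq_ite hχ, huncurry, Fintype.card_prod]

theorem sum_addChar_mul_det_fin_two (hχ : χ ≠ 1) {s : F} (hs : s ≠ 0) :
    ∑ x : Matrix (Fin 2) (Fin 2) F, χ (s * x.det) = (Fintype.card F : ℂ) ^ 2 := by
  have hrow : ∀ r₀ r₁ : Fin 2 → F,
      s * (Matrix.of ![r₀, r₁]).det = ![-(s * r₀ 1), s * r₀ 0] ⬝ᵥ r₁ := by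
    intro r₀ r₁
    simp only [Matrix.det_fin_two, Matrix.of_apply, Matrix.cons_val', Matrix.cons_val_fin_one,
      Matrix.cons_val_zero, Matrix.cons_val_one, dotProduct, Fin.sum_univ_two]
    ring
  have hzero : ∀ r₀ : Fin 2 → F, ![-(s * r₀ 1), s * r₀ 0] = 0 ↔ r₀ = 0 := by
    intro r₀
    simp [hs, funext_iff, Fin.forall_fin_two, and_comm]
  refine (Fintype.sum_equiv (finTwoArrowEquiv _).symm
    (fun r => χ (s * (Matrix.of ![r.1, r.2]).det)) _ fun r => rfl).symm.trans ?_
  simp_rw [Fintype.sum_prod_type, hrow, sum_addChar_dotProduct_eq_ite hχ, Fintype.card_fin,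
    hzero, sum_ite_eq', mem_univ, if_true]

theorem sum_addChar_mul_det_mul_pairing_fin_two (hχ : χ ≠ 1) (m : Matrix (Fin 2) (Fin 2) F)
    {s : F} (hs : s ≠ 0) :
    ∑ x : Matrix (Fin 2) (Fin 2) F, χ (s * x.det) * χ (-∑ a, ∑ b, m a b * x a b) =
      (Fintype.card F : ℂ) ^ 2 * χ (-(m.det / s)) := by
  simp_rw [← AddChar.map_add_eq_mul, ← sub_eq_add_neg, mul_det_sub_pairing_fin_two _ _ hs,
    sub_eq_add_neg _ (m.det / s), AddChar.map_add_eq_mul, ← sum_mul]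
  rw [Fintype.sum_equiv (Equiv.subRight (s⁻¹ • m.adjugateᵀ))
    (fun x => χ (s * (x - s⁻¹ • m.adjugateᵀ).det)) (fun y => χ (s * y.det)) fun _ => rfl,
    sum_addChar_mul_det_fin_two hχ hs]

end

theorem stmt_7 {F : Type*} [Field F] [Fintype F] [DecidableEq F]
    (χ : AddChar F ℂ) (hχ : χ ≠ 1) (t : F) (m : Matrix (Fin 2) (Fin 2) F) :
    ((Fintype.card F : ℂ)) ⁻¹ ^ 4 *
        ∑ x ∈ Finset.univ.filter (fun x : Matrix (Fin 2) (Fin 2) F => x.det = t),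
          χ (-(∑ a : Fin 2, ∑ b : Fin 2, m a b * x a b)) =
      (if m = 0 then 1 else 0) / (Fintype.card F : ℂ) +
        ((Fintype.card F : ℂ))⁻¹ ^ 3 *
          ∑ s ∈ Finset.univ \ {0}, χ (-(s * t) - m.det / s) := by
  have hsum := card_mul_sum_filter_eq_sum_addChar hχ Matrix.det
    (fun x => χ (-∑ a, ∑ b, m a b * x a b)) t
  set q : ℂ := (Fintype.card F : ℂ)
  have hq : q ≠ 0 := Nat.cast_ne_zero.mpr Fintype.card_ne_zero
  have hzero : ∑ x : Matrix (Fin 2) (Fin 2) F, χ (0 * x.det) * χ (-∑ a, ∑ b, m a b * x a b) =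
      if m = 0 then q ^ 4 else 0 := by
    simpa only [zero_mul, AddChar.map_zero_eq_one, one_mul, Matrix.neg_apply, neg_mul,
      sum_neg_distrib, neg_eq_zero, Fintype.card_fin, Nat.reduceMul]
      using sum_addChar_matrix_pairing_eq_ite hχ (-m)
  have hnonzero : ∀ s ∈ univ \ {0}, χ (-(s * t)) * ∑ x : Matrix (Fin 2) (Fin 2) F,
      χ (s * x.det) * χ (-∑ a, ∑ b, m a b * x a b) = q ^ 2 * χ (-(s * t) - m.det / s) := by
    intro s hs
    rw [sum_addChar_mul_det_mul_pairing_fin_two hχ m (by simpa using hs), mul_left_comm,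
      ← AddChar.map_add_eq_mul, ← sub_eq_add_neg]
  rw [sum_eq_add_sum_sdiff_singleton_of_mem (mem_univ 0), zero_mul, neg_zero,
    AddChar.map_zero_eq_one, one_mul, hzero, sum_congr rfl hnonzero, ← mul_sum] at hsum
  generalize ∑ s ∈ univ \ {0}, χ (-(s * t) - m.det / s) = T at hsum ⊢
  generalize ∑ x ∈ univ.filter (fun x : Matrix (Fin 2) (Fin 2) F => x.det = t),
    χ (-∑ a, ∑ b, m a b * x a b) = S at hsum ⊢
  split_ifs at hsum ⊢ <;> field_simp <;> exact mul_left_cancel₀ hq (by linear_combination hsum)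
end

section
/- Let S ⊆ M₂(F_q) be a product-type set, i.e., S corresponds to S₁ × S₂ ⊆ F_q² × F_q² under identifying a matrix with its pair of rows. Then for each i ∈ F_q*, ||S ∩ D_i| − |S|/q| ≤ q^{1/2} |S|^{1/2}. -/
/-!
Write the count as `∑ a ∈ S₁, T a`, where `T a` is the number of nonzero `b ∈ S₂` with
`det (a, b) = i`. For `b ≠ 0` the equation `det (a, b) = i` cuts out an affine line of `q` points
`a`, so `∑ T = q m` with `m = #(S₂ \ {0})`; by Cramer's rule and `i ≠ 0`, two distinct `b, b'` have
at most one common solution `a`, so `∑ T ^ 2 ≤ q m + m (m - 1)`. Over the `q ^ 2` points of `F_q²`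
this bounds the variance of `T` about `#S₂ / q` by `q #S₂`, and Cauchy–Schwarz over `S₁` gives
the claim.
-/

open Finset

theorem AddMonoidHom.card_fiber_mul_card_eq {G M : Type*} [AddGroup G] [Fintype G] [AddMonoid M]
    [Fintype M] [DecidableEq M] (f : G →+ M) (hf : Function.Surjective f) (y : M) :
    #{g | f g = y} * Fintype.card M = Fintype.card G := by
  calc #{g | f g = y} * Fintype.card M = ∑ x : M, #{g | f g = x} := by
        rw [sum_congr rfl fun x _ ↦ AddMonoidHom.card_fiber_eq_of_mem_range f (hf x) (hf y),
          sum_const, card_univ, smul_eq_mul, mul_comm]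
    _ = Fintype.card G := (card_eq_sum_card_fiberwise fun _ _ ↦ mem_univ _).symm

theorem Finset.abs_sum_sub_card_mul_le_sqrt {α : Type*} [Fintype α] (s : Finset α) (f : α → ℝ)
    (c : ℝ) : |∑ a ∈ s, f a - #s * c| ≤ √(#s * ∑ a, (f a - c) ^ 2) := by
  have hsum : ∑ a ∈ s, f a - #s * c = ∑ a ∈ s, (f a - c) := by
    rw [sum_sub_distrib, sum_const, nsmul_eq_mul]
  rw [hsum, ← Real.sqrt_sq_eq_abs]
  gcongr
  calc (∑ a ∈ s, (f a - c)) ^ 2 ≤ #s * ∑ a ∈ s, (f a - c) ^ 2 := sq_sum_le_card_mul_sum_sq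
    _ ≤ #s * ∑ a, (f a - c) ^ 2 := by
      gcongr _ * ?_
      exact sum_le_univ_sum_of_nonneg fun _ ↦ sq_nonneg _

theorem sum_sq_sub_div_le {α : Type*} [Fintype α] (f : α → ℝ) {q m n : ℝ} (hq : 1 ≤ q)
    (hα : (Fintype.card α : ℝ) = q ^ 2) (h₁ : ∑ a, f a = m * q)
    (h₂ : ∑ a, f a ^ 2 + m ≤ m * q + m * m) (hm : 0 ≤ m) (hmn : m ≤ n) (hnm : n ≤ m + 1) :
    ∑ a, (f a - n / q) ^ 2 ≤ q * n := by
  have hexpand : ∑ a, (f a - n / q) ^ 2 =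
      ∑ a, f a ^ 2 - 2 * (n / q) * ∑ a, f a + q ^ 2 * (n / q) ^ 2 := by
    have hsq : ∀ a, (f a - n / q) ^ 2 = f a ^ 2 - 2 * (n / q) * f a + (n / q) ^ 2 :=
      fun a ↦ by ring
    simp only [hsq, sum_add_distrib, sum_sub_distrib, ← mul_sum, sum_const, card_univ,
      nsmul_eq_mul, hα]
  have hq0 : q ≠ 0 := by positivity
  rw [hexpand, h₁]
  field_simp
  nlinarith [mul_nonneg (sub_nonneg.2 hmn) (sub_nonneg.2 hnm),
    mul_nonneg (sub_nonneg.2 hq) (sub_nonneg.2 hmn)]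

section rowDet

variable {K : Type*} [Field K]

def rowDet (a b : Fin 2 → K) : K := a 0 * b 1 - a 1 * b 0

@[simp]
theorem rowDet_zero_right (a : Fin 2 → K) : rowDet a 0 = 0 := by simp [rowDet]

def rowDetLeft (b : Fin 2 → K) : (Fin 2 → K) →+ K :=
  AddMonoidHom.mk' (rowDet · b) fun a a' ↦ by simp only [rowDet, Pi.add_apply]; ring

theorem rowDetLeft_surjective {b : Fin 2 → K} (hb : b ≠ 0) :
    Function.Surjective (rowDetLeft b) := by
  obtain ⟨k, hk⟩ := Function.ne_iff.1 hb
  intro j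
  fin_cases k
  · exact ⟨![0, -j / b 0], by simp at hk; simp [rowDetLeft, rowDet, hk]⟩
  · exact ⟨![j / b 1, 0], by simp at hk; simp [rowDetLeft, rowDet, hk]⟩

theorem card_rowDet_eq [Fintype K] [DecidableEq K] {b : Fin 2 → K} (hb : b ≠ 0) (j : K) :
    #{a | rowDet a b = j} = Fintype.card K := by
  have h := (rowDetLeft b).card_fiber_mul_card_eq (rowDetLeft_surjective hb) j
  rw [Fintype.card_fun, Fintype.card_fin, sq] at h
  exact Nat.eq_of_mul_eq_mul_right Fintype.card_pos h

/-- Cramer's rule for the system `rowDet a b = i`, `rowDet a b' = i` in the unknown `a`. -/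
theorem rowDet_mul_rowDet_eq {a b b' : Fin 2 → K} {i : K} (h : rowDet a b = i)
    (h' : rowDet a b' = i) (k : Fin 2) : a k * rowDet b b' = i * (b k - b' k) := by
  unfold rowDet at *
  fin_cases k <;> simp only [Fin.zero_eta, Fin.mk_one]
  · linear_combination b 0 * h' - b' 0 * h
  · linear_combination b 1 * h' - b' 1 * h

theorem card_rowDet_eq_and_rowDet_eq_le_one [Fintype K] [DecidableEq K] {b b' : Fin 2 → K}
    {i : K} (hi : i ≠ 0) (hne : b ≠ b') : #{a | rowDet a b = i ∧ rowDet a b' = i} ≤ 1 := by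
  refine card_le_one.2 fun a ha c hc ↦ ?_
  simp only [mem_filter, mem_univ, true_and] at ha hc
  have hD : rowDet b b' ≠ 0 := fun hD ↦ hne <| funext fun k ↦ by
    have := rowDet_mul_rowDet_eq ha.1 ha.2 k
    rw [hD, mul_zero, eq_comm, mul_eq_zero, sub_eq_zero] at this
    exact this.resolve_left hi
  funext k
  exact mul_right_cancel₀ hD <| (rowDet_mul_rowDet_eq ha.1 ha.2 k).trans
    (rowDet_mul_rowDet_eq hc.1 hc.2 k).symm

theorem card_filter_product_rowDet_eq_sum [DecidableEq K] (S₁ S₂ : Finset (Fin 2 → K)) {i : K}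
    (hi : i ≠ 0) :
    #{p ∈ S₁ ×ˢ S₂ | rowDet p.1 p.2 = i} = ∑ a ∈ S₁, #{b ∈ S₂.erase 0 | rowDet a b = i} := by
  rw [card_filter, sum_product]
  refine sum_congr rfl fun a _ ↦ ?_
  rw [← card_filter, filter_erase, erase_eq_of_notMem]
  simp [hi.symm]

variable [Fintype K] [DecidableEq K] {B : Finset (Fin 2 → K)}

theorem sum_card_filter_rowDet_eq (hB : 0 ∉ B) (i : K) :
    ∑ a, #{b ∈ B | rowDet a b = i} = #B * Fintype.card K := by
  have hdouble := sum_card_bipartiteAbove_eq_sum_card_bipartiteBelow (s := univ) (t := B)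
    (r := fun a b ↦ rowDet a b = i)
  simp only [bipartiteAbove, bipartiteBelow] at hdouble
  rw [hdouble, sum_congr rfl fun b hb ↦ card_rowDet_eq (ne_of_mem_of_not_mem hb hB) i,
    sum_const, smul_eq_mul]

theorem sum_sq_card_filter_rowDet_add_card_le (hB : 0 ∉ B) {i : K} (hi : i ≠ 0) :
    ∑ a, #{b ∈ B | rowDet a b = i} ^ 2 + #B ≤ #B * Fintype.card K + #B * #B := by
  have hsq : ∀ a, #{b ∈ B | rowDet a b = i} ^ 2 =
      #{p ∈ B ×ˢ B | rowDet a p.1 = i ∧ rowDet a p.2 = i} := fun a ↦ by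
    rw [sq, ← card_product, ← filter_product]
  have hdouble := sum_card_bipartiteAbove_eq_sum_card_bipartiteBelow (s := univ) (t := B ×ˢ B)
    (r := fun a p ↦ rowDet a p.1 = i ∧ rowDet a p.2 = i)
  simp only [bipartiteAbove, bipartiteBelow] at hdouble
  have hdiag : ∑ p ∈ B.diag, #{a | rowDet a p.1 = i ∧ rowDet a p.2 = i} =
      #B * Fintype.card K := by
    rw [sum_diag, sum_congr rfl fun b hb ↦ ?_, sum_const, smul_eq_mul]
    simpa only [and_self] using card_rowDet_eq (ne_of_mem_of_not_mem hb hB) i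
  have hoffDiag : ∑ p ∈ B.offDiag, #{a | rowDet a p.1 = i ∧ rowDet a p.2 = i} ≤ #B.offDiag :=
    card_eq_sum_ones B.offDiag ▸ sum_le_sum fun p hp ↦
      card_rowDet_eq_and_rowDet_eq_le_one hi (mem_offDiag.1 hp).2.2
  rw [sum_congr rfl fun a _ ↦ hsq a, hdouble, ← diag_union_offDiag,
    sum_union (disjoint_diag_offDiag _), hdiag]
  have := B.offDiag_card
  have := Nat.le_mul_self #B
  omega

end rowDet

theorem stmt_12 {K : Type*} [Field K] [Fintype K] [DecidableEq K]
    (S1 S2 : Finset (Fin 2 → K)) (i : K) (hi : i ≠ 0) :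
    |((((S1 ×ˢ S2).filter
          (fun p => p.1 0 * p.2 1 - p.1 1 * p.2 0 = i)).card : ℝ)) -
        (S1.card : ℝ) * S2.card / Fintype.card K| ≤
      Real.sqrt (Fintype.card K) * Real.sqrt ((S1.card : ℝ) * S2.card) := by
  set B := S2.erase 0
  have hB : 0 ∉ B := notMem_erase 0 S2
  have h₁ : ∑ a, (#{b ∈ B | rowDet a b = i} : ℝ) = #B * Fintype.card K := by
    exact_mod_cast sum_card_filter_rowDet_eq hB i
  have h₂ : ∑ a, (#{b ∈ B | rowDet a b = i} : ℝ) ^ 2 + #B ≤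
      #B * Fintype.card K + #B * #B := by
    exact_mod_cast sum_sq_card_filter_rowDet_add_card_le hB hi
  have hS2 : #S2 ≤ #B + 1 := by
    have : #S2 - 1 ≤ #B := pred_card_le_card_erase
    omega
  have hvar : ∑ a, (#{b ∈ B | rowDet a b = i} - #S2 / Fintype.card K : ℝ) ^ 2 ≤
      Fintype.card K * #S2 :=
    sum_sq_sub_div_le _ (by exact_mod_cast Fintype.card_pos) (by simp) h₁ h₂ (by positivity)
      (by exact_mod_cast card_erase_le) (by exact_mod_cast hS2)
  calc _ = |∑ a ∈ S1, (#{b ∈ B | rowDet a b = i} : ℝ) - #S1 * (#S2 / Fintype.card K : ℝ)| := by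
        rw [← mul_div_assoc, ← Nat.cast_sum, ← card_filter_product_rowDet_eq_sum S1 S2 hi]; rfl
    _ ≤ √(#S1 * ∑ a, (#{b ∈ B | rowDet a b = i} - #S2 / Fintype.card K : ℝ) ^ 2) :=
      abs_sum_sub_card_mul_le_sqrt S1 _ _
    _ ≤ √(#S1 * (Fintype.card K * #S2)) := by gcongr
    _ = _ := by rw [← Real.sqrt_mul (Nat.cast_nonneg _)]; ring_nf
end

section
/- Let i be a non-square element of F_q*, let H_i = {(x₁ x₂; −x₂ x₄) ∈ M₂(F_q) : x₁x₄ + x₂² = i}, and let E ⊆ H_i satisfy E ∩ (−E) = ∅. Then for fixed y ∈ H_i, the equation x ⊙ y = −2i with x ∈ H_i has the unique solution x = −y; consequently, 0 ∉ det(E + E). -/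
open Finset

lemma key_lemma {K : Type*} [Field K] (i : K) (hi : ¬ IsSquare i) {a b d p q s : K}
    (h1 : a * d + b ^ 2 = i) (h2 : p * s + q ^ 2 = i)
    (h3 : (a + p) * (d + s) + (b + q) ^ 2 = 0) :
    a = -p ∧ b = -q ∧ d = -s := by
  have eq2 : (a + p) * s + (d + s) * p + 2 * (b + q) * q = 0 := by
    linear_combination h3 - h1 + h2
  have huz : a + p = 0 := by
    by_contra hun
    refine hi ⟨((b + q) * p - (a + p) * q) / (a + p), ?_⟩
    have hsq : i * (a + p) ^ 2 = ((b + q) * p - (a + p) * q) ^ 2 := by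
      linear_combination p * (a + p) * eq2 - p ^ 2 * h3 - (a + p) ^ 2 * h2
    field_simp
    linear_combination hsq
  have hvz : b + q = 0 := by
    have h : (b + q) ^ 2 = 0 := by linear_combination h3 - (d + s) * huz
    exact pow_eq_zero_iff (by norm_num) |>.mp h
  have hwz : d + s = 0 := by
    rcases eq_or_ne p 0 with hp | hp
    · exact (hi ⟨q, by linear_combination s * hp - h2⟩).elim
    · have h : (d + s) * p = 0 := by linear_combination eq2 - s * huz - 2 * q * hvz
      exact (mul_eq_zero.mp h).resolve_right hp
  exact ⟨by linear_combination huz, by linear_combination hvz, by linear_combination hwz⟩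

lemma det_add_zero {K : Type*} [Field K] (i : K) (hi : ¬ IsSquare i)
    {x y : Matrix (Fin 2) (Fin 2) K}
    (hx1 : x 1 0 = -(x 0 1)) (hx2 : x.det = i)
    (hy1 : y 1 0 = -(y 0 1)) (hy2 : y.det = i)
    (h : (x + y).det = 0) : x = -y := by
  rw [Matrix.det_fin_two] at hx2 hy2 h
  simp only [Matrix.add_apply] at h
  have h1 : x 0 0 * x 1 1 + (x 0 1) ^ 2 = i := by
    rw [hx1] at hx2; linear_combination hx2
  have h2 : y 0 0 * y 1 1 + (y 0 1) ^ 2 = i := by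
    rw [hy1] at hy2; linear_combination hy2
  have h3 : (x 0 0 + y 0 0) * (x 1 1 + y 1 1) + (x 0 1 + y 0 1) ^ 2 = 0 := by
    rw [hx1, hy1] at h; linear_combination h
  obtain ⟨e1, e2, e3⟩ := key_lemma i hi h1 h2 h3
  have e4 : x 1 0 = -(y 1 0) := by rw [hx1, hy1, e2]
  ext r c
  fin_cases r <;> fin_cases c <;>
    simp only [Fin.mk_zero, Fin.mk_one, Matrix.neg_apply, Fin.isValue] <;>
    first | exact e1 | exact e2 | exact e3 | exact e4

theorem stmt_14 {K : Type*} [Field K] [Fintype K] [DecidableEq K]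
    (hodd : Odd (Fintype.card K))
    (i : K) (hi : ¬ IsSquare i)
    (Hi : Set (Matrix (Fin 2) (Fin 2) K))
    (hHi : Hi = {x | x 1 0 = -(x 0 1) ∧ x.det = i})
    (E : Finset (Matrix (Fin 2) (Fin 2) K))
    (hE : ∀ x ∈ E, x ∈ Hi) (hEE : ∀ x ∈ E, -x ∉ E) :
    (∀ y ∈ Hi, ∀ x, (x ∈ Hi ∧ odot x y = -(2 * i)) ↔ x = -y) ∧
    (∀ x ∈ E, ∀ y ∈ E, (x + y).det ≠ 0) := by
  subst hHi
  constructor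
  · rintro y ⟨hy1, hy2⟩ x
    constructor
    · rintro ⟨⟨hx1, hx2⟩, hxy⟩
      apply det_add_zero i hi hx1 hx2 hy1 hy2
      rw [Matrix.det_fin_two] at hx2 hy2 ⊢
      simp only [Matrix.add_apply]
      unfold odot at hxy
      linear_combination hx2 + hy2 + hxy
    · rintro rfl
      refine ⟨⟨by simp [hy1], ?_⟩, ?_⟩
      · rw [Matrix.det_fin_two] at hy2 ⊢
        simp only [Matrix.neg_apply]
        linear_combination hy2
      · unfold odot
        simp only [Matrix.neg_apply]
        rw [Matrix.det_fin_two, hy1] at hy2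
        rw [hy1]
        linear_combination -2 * hy2
  · intro x hx y hy h
    obtain ⟨hx1, hx2⟩ := hE x hx
    obtain ⟨hy1, hy2⟩ := hE y hy
    have hxy := det_add_zero i hi hx1 hx2 hy1 hy2 h
    exact hEE y hy (hxy ▸ hx)
end

section
/- Let q = p² for an odd prime p and let E = SL₂(F_p) viewed inside M₂(F_q). Then for every positive integer k, the determinant set det(2kE) of the 2k-fold sumset E + ⋯ + E is contained in F_p, hence is a proper subset of F_q, while |E| = p³ − p ∼ q^{3/2}. -/
/-!
The entries of every element of an iterated sumset of `E` lie in the prime field `𝔽_p`, and the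
matrices with entries in a subring form a subring, so their determinants lie in `𝔽_p ⊊ 𝔽_q`.
The count `|SL₂(𝔽_p)| = p³ - p` comes from `det : GL₂(𝔽_p) → 𝔽_pˣ` being surjective with kernel
`SL₂(𝔽_p)`, together with `|GL₂(𝔽_p)| = (p² - 1)(p² - p)`.
-/

open Finset Pointwise

/-- The `n`-fold iterated sumset of a finite set in an additive commutative monoid. -/
def iterSum {M : Type*} [AddCommMonoid M] [DecidableEq M] : ℕ → Finset M → Finset M
  | 0, _ => {0}
  | n + 1, E => E + iterSum n E

theorem coe_iterSum_subset {M : Type*} [AddCommMonoid M] [DecidableEq M] {T : AddSubmonoid M}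
    {E : Finset M} (hE : (E : Set M) ⊆ T) : ∀ n, (iterSum n E : Set M) ⊆ T
  | 0 => by simp [iterSum]
  | n + 1 => by
    rw [iterSum, coe_add]
    exact AddSubmonoid.add_subset hE (coe_iterSum_subset hE n)

namespace Matrix

variable {n R : Type*} [Fintype n] [DecidableEq n] [CommRing R]

theorem det_mem_of_mem_matrix (S : Subring R) {M : Matrix n n R} (hM : M ∈ S.matrix) :
    M.det ∈ S := by
  have hM' : M = S.subtype.mapMatrix (of fun i j => ⟨M i j, hM i j⟩) := rfl
  rw [hM', ← RingHom.map_det]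
  exact SetLike.coe_mem _

namespace SpecialLinearGroup

theorem card_mul_card_units [Nonempty n] :
    Nat.card (SpecialLinearGroup n R) * Nat.card Rˣ = Nat.card (GL n R) := by
  let ker := (GeneralLinearGroup.det : GL n R →* Rˣ).ker
  have hker : Nat.card ker = Nat.card (SpecialLinearGroup n R) :=
    Nat.card_congr
      { toFun := fun g => ⟨g.1, congrArg Units.val g.2⟩
        invFun := fun A => ⟨toGL A, Units.ext A.2⟩
        left_inv := fun _ => Subtype.ext (Units.ext rfl)
        right_inv := fun _ => rfl }
  rw [← hker, ← ker.card_mul_index, Subgroup.index_ker,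
    MonoidHom.range_eq_top.mpr GeneralLinearGroup.det_surjective, Subgroup.card_top]

theorem card_fin_two (F : Type*) [Field F] [Fintype F] :
    Nat.card (SpecialLinearGroup (Fin 2) F) = Fintype.card F ^ 3 - Fintype.card F := by
  have h := card_mul_card_units (n := Fin 2) (R := F)
  rw [card_GL_field, Fin.prod_univ_two, Nat.card_units, Nat.card_eq_fintype_card (α := F)] at h
  simp only [Fin.val_zero, Fin.val_one, pow_zero, pow_one] at h
  set q := Fintype.card F
  have hq : 1 < q := Fintype.one_lt_card
  refine Nat.eq_of_mul_eq_mul_right (Nat.sub_pos_of_lt hq) (h.trans ?_)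
  have h1 : 1 ≤ q ^ 2 := Nat.one_le_pow _ _ (by omega)
  have h2 : q ≤ q ^ 2 := Nat.le_self_pow (by norm_num) q
  have h3 : q ≤ q ^ 3 := Nat.le_self_pow (by norm_num) q
  zify [h1, h2, h3, hq.le]
  ring

variable {S : Type*} [CommRing S]

theorem card_eq_of_mem_iff_entries_mem_range {f : R →+* S} (hf : Function.Injective f)
    {E : Finset (Matrix n n S)}
    (hE : ∀ x, x ∈ E ↔ (∀ i j, x i j ∈ Set.range f) ∧ x.det = 1) :
    E.card = Nat.card (SpecialLinearGroup n R) := by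
  let embed : SpecialLinearGroup n R → Matrix n n S := fun A => (A : Matrix n n R).map f
  have h_inj : Function.Injective embed := fun A B h => ext A B fun i j => hf (congrFun₂ h i j)
  suffices hrange : Set.range embed = E by
    rw [← Nat.card_eq_finsetCard, ← Finset.coe_sort_coe, ← hrange,
      Nat.card_range_of_injective h_inj]
  ext x
  simp only [SetLike.mem_coe, hE, Set.mem_range]
  constructor
  · rintro ⟨A, rfl⟩
    refine ⟨fun i j => ⟨A i j, rfl⟩, ?_⟩
    change (f.mapMatrix (A : Matrix n n R)).det = 1
    rw [← RingHom.map_det, A.2, map_one]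
  · rintro ⟨hx, hdet⟩
    choose A hA using hx
    have hmap : (of A).map f = x := Matrix.ext hA
    refine ⟨⟨of A, hf ?_⟩, hmap⟩
    rw [RingHom.map_det, RingHom.mapMatrix_apply, hmap, hdet, map_one]

end SpecialLinearGroup

end Matrix

theorem stmt_19_general (p : ℕ) (hp : p.Prime)
    (K : Type*) [Field K] [Fintype K] [DecidableEq K] [CharP K p]
    (hq : Fintype.card K = p ^ 2)
    (E : Finset (Matrix (Fin 2) (Fin 2) K))
    (hE : ∀ x : Matrix (Fin 2) (Fin 2) K,
      x ∈ E ↔ ((∀ a b, x a b ∈ Set.range (ZMod.castHom (dvd_refl p) K)) ∧ x.det = 1)) :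
    (∀ k : ℕ, 1 ≤ k → ∀ x ∈ iterSum (2 * k) E,
        x.det ∈ Set.range (ZMod.castHom (dvd_refl p) K)) ∧
    Set.range (⇑(ZMod.castHom (dvd_refl p) K)) ≠ Set.univ ∧
    E.card = p ^ 3 - p := by
  have : Fact p.Prime := ⟨hp⟩
  set f := ZMod.castHom (dvd_refl p) K
  refine ⟨fun k _ x hx => ?_, fun hrange => ?_, ?_⟩
  · let T : Subring (Matrix (Fin 2) (Fin 2) K) := f.range.matrix
    have hE_sub : (E : Set (Matrix (Fin 2) (Fin 2) K)) ⊆ T.toAddSubmonoid :=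
      fun y hy => ((hE y).1 hy).1
    exact Matrix.det_mem_of_mem_matrix f.range (coe_iterSum_subset hE_sub (2 * k) hx)
  · have hcard := Fintype.card_le_of_surjective f (Set.range_eq_univ.mp hrange)
    rw [hq, ZMod.card] at hcard
    exact absurd hcard (not_le.mpr (lt_self_pow₀ hp.one_lt one_lt_two))
  · rw [Matrix.SpecialLinearGroup.card_eq_of_mem_iff_entries_mem_range f.injective hE,
      Matrix.SpecialLinearGroup.card_fin_two, ZMod.card]

theorem stmt_19 (p : ℕ) (hp : p.Prime) (hodd : Odd p)
    (K : Type*) [Field K] [Fintype K] [DecidableEq K] [CharP K p]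
    (hq : Fintype.card K = p ^ 2)
    (E : Finset (Matrix (Fin 2) (Fin 2) K))
    (hE : ∀ x : Matrix (Fin 2) (Fin 2) K,
      x ∈ E ↔ ((∀ a b, x a b ∈ Set.range (ZMod.castHom (dvd_refl p) K)) ∧ x.det = 1)) :
    (∀ k : ℕ, 1 ≤ k → ∀ x ∈ iterSum (2 * k) E,
        x.det ∈ Set.range (ZMod.castHom (dvd_refl p) K)) ∧
    Set.range (⇑(ZMod.castHom (dvd_refl p) K)) ≠ Set.univ ∧
    E.card = p ^ 3 - p :=
  stmt_19_general p hp K hq E hE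
end
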